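/- The bilinear bracket defined on the free complex vector space with basis {x_{(a,i)} : a ∈ ℤ, i ∈ ℕ} by [x_{(a,i)}, x_{(b,j)}] = ((b−1)i − (a−1)j)·x_{(a+b, i+j−1)} is alternating and satisfies the Jacobi identity, and hence makes this vector space into a Lie algebra over ℂ (the Lie algebra ℬ of Block type). -/

import Mathlib

noncomputable section

/-- Index set for the basis of the Block type Lie algebra. -/
abbrev BlockIndex : Type := ℤ × ℕ

/-- The underlying vector space of the Block type Lie algebra `ℬ`:
the free complex vector space on `BlockIndex`. -/
abbrev BlockAlg : Type := BlockIndex →₀ ℂ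

/-- The basis vector `x_{(a,i)}`. -/
def xv (p : BlockIndex) : BlockAlg := Finsupp.single p 1

/-- Structure constant `(b-1)i - (a-1)j` for `[x_{(a,i)}, x_{(b,j)}]`. -/
def structCoeff (p q : BlockIndex) : ℂ :=
  (((q.1 - 1) * p.2 - (p.1 - 1) * q.2 : ℤ) : ℂ)

/-- The index `(a+b, i+j-1)` of the target basis vector. -/
def targetIdx (p q : BlockIndex) : BlockIndex := (p.1 + q.1, p.2 + q.2 - 1)

/-- The bracket on `ℬ`, defined bilinearly from
`[x_{(a,i)}, x_{(b,j)}] = ((b-1)i - (a-1)j)·x_{(a+b,i+j-1)}`. -/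
def blockBracket (u v : BlockAlg) : BlockAlg :=
  u.sum fun p c => v.sum fun q d => (c * d * structCoeff p q) • xv (targetIdx p q)

/-! The bracket is the bilinear extension of its values on basis vectors, so bilinearity is
automatic, while skew-symmetry and the Jacobi identity, being multilinear, need only be checked
on basis vectors. Skew-symmetry there is the antisymmetry of `(b-1)i - (a-1)j` under
`(a,i) ↔ (b,j)`, and gives `[u,u] = 0` because `2 ≠ 0` in `ℂ`. For the Jacobi identity, the
three double brackets of `x_{(a,i)}, x_{(b,j)}, x_{(c,k)}` are all multiples of
`x_{(a+b+c, i+j+k-2)}`, and their coefficients sum to zero by a polynomial identity. Since the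
jacobiator is linear in its first argument and invariant under cyclic rotation, vanishing on
basis vectors propagates to all arguments one slot at a time. -/

namespace LinearMap

variable {R ι : Type*} [CommSemiring R] (B : (ι →₀ R) →ₗ[R] (ι →₀ R) →ₗ[R] (ι →₀ R))

def jacobiator (u v w : ι →₀ R) : ι →₀ R := B u (B v w) + B v (B w u) + B w (B u v)

theorem jacobiator_rotate (u v w : ι →₀ R) : B.jacobiator u v w = B.jacobiator v w u := by
  simp only [jacobiator]; abel

theorem jacobiator_eq_zero_of_single_left {v w : ι →₀ R}
    (h : ∀ p, B.jacobiator (Finsupp.single p 1) v w = 0) (u : ι →₀ R) :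
    B.jacobiator u v w = 0 := by
  have hlin : B.flip (B v w) + B v ∘ₗ B w + B w ∘ₗ B.flip v = 0 :=
    Finsupp.lhom_ext' fun p => LinearMap.ext_ring (by simpa [jacobiator] using h p)
  simpa [jacobiator] using LinearMap.congr_fun hlin u

theorem jacobiator_eq_zero_of_single
    (h : ∀ p q r, B.jacobiator (Finsupp.single p 1) (Finsupp.single q 1) (Finsupp.single r 1) = 0)
    (u v w : ι →₀ R) : B.jacobiator u v w = 0 := by
  refine B.jacobiator_eq_zero_of_single_left (fun p => ?_) u
  rw [B.jacobiator_rotate]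
  refine B.jacobiator_eq_zero_of_single_left (fun q => ?_) v
  rw [B.jacobiator_rotate]
  exact B.jacobiator_eq_zero_of_single_left (fun r => h r p q) w

end LinearMap

def blockBracketₗ : BlockAlg →ₗ[ℂ] BlockAlg →ₗ[ℂ] BlockAlg :=
  Finsupp.linearCombination ℂ fun p =>
    Finsupp.linearCombination ℂ fun q => structCoeff p q • xv (targetIdx p q)

theorem blockBracketₗ_apply (u v : BlockAlg) : blockBracketₗ u v = blockBracket u v := by
  simp [blockBracketₗ, blockBracket, Finsupp.linearCombination_apply, Finsupp.smul_sum,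
    LinearMap.finsupp_sum_apply, mul_smul]

theorem blockBracket_xv (p q : BlockIndex) :
    blockBracket (xv p) (xv q) = structCoeff p q • xv (targetIdx p q) := by
  simp [← blockBracketₗ_apply, blockBracketₗ, xv]

theorem structCoeff_swap (p q : BlockIndex) : structCoeff q p = -structCoeff p q := by
  simp only [structCoeff]; push_cast; ring

theorem targetIdx_swap (p q : BlockIndex) : targetIdx q p = targetIdx p q := by
  simp only [targetIdx, add_comm]

theorem blockBracketₗ_flip : blockBracketₗ.flip = blockBracketₗ.compr₂ (-LinearMap.id) :=
  Finsupp.lhom_ext' fun p => LinearMap.ext_ring <|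
    Finsupp.lhom_ext' fun q => LinearMap.ext_ring <| by
      simp only [LinearMap.comp_apply, Finsupp.lsingle_apply, LinearMap.flip_apply,
        LinearMap.compr₂_apply, LinearMap.neg_apply, LinearMap.id_apply, blockBracketₗ_apply,
        ← xv.eq_1]
      rw [blockBracket_xv, blockBracket_xv, structCoeff_swap, targetIdx_swap, neg_smul]

theorem blockBracket_self (u : BlockAlg) : blockBracket u u = 0 := by
  refine self_eq_neg.mp ?_
  simpa [blockBracketₗ_apply] using LinearMap.congr_fun₂ blockBracketₗ_flip u u

theorem blockBracket_xv_blockBracket_xv (p q r : BlockIndex) :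
    blockBracket (xv p) (blockBracket (xv q) (xv r)) =
      ((((r.1 - 1) * q.2 - (q.1 - 1) * r.2) * ((q.1 + r.1 - 1) * p.2 - (p.1 - 1) * (q.2 + r.2 - 1))
        : ℤ) : ℂ) • xv (p.1 + q.1 + r.1, p.2 + q.2 + r.2 - 2) := by
  obtain ⟨a, i⟩ := p; obtain ⟨b, j⟩ := q; obtain ⟨c, k⟩ := r
  rw [blockBracket_xv, ← blockBracketₗ_apply, map_smul, blockBracketₗ_apply, blockBracket_xv,
    smul_smul]
  -- If `j + k = 0` the natural subtraction in `targetIdx` truncates, but then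
  -- `structCoeff q r = 0`.
  rcases Nat.eq_zero_or_pos (j + k) with hjk | hjk
  · obtain ⟨rfl, rfl⟩ := Nat.add_eq_zero_iff.mp hjk
    simp [structCoeff]
  · have hidx : targetIdx (a, i) (targetIdx (b, j) (c, k)) = (a + b + c, i + j + k - 2) :=
      Prod.ext (by simp only [targetIdx]; ring) (by simp only [targetIdx]; omega)
    have hsub : ((j + k - 1 : ℕ) : ℤ) = j + k - 1 := by omega
    rw [hidx]
    congr 1
    simp only [structCoeff, targetIdx]
    push_cast [hsub]
    ring

theorem blockBracketₗ_jacobiator_xv (p q r : BlockIndex) :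
    blockBracketₗ.jacobiator (xv p) (xv q) (xv r) = 0 := by
  simp only [LinearMap.jacobiator, blockBracketₗ_apply, blockBracket_xv_blockBracket_xv]
  have h₁ : ((q.1 + r.1 + p.1, q.2 + r.2 + p.2 - 2) : BlockIndex) =
      (p.1 + q.1 + r.1, p.2 + q.2 + r.2 - 2) := Prod.ext (by ring) (by omega)
  have h₂ : ((r.1 + p.1 + q.1, r.2 + p.2 + q.2 - 2) : BlockIndex) =
      (p.1 + q.1 + r.1, p.2 + q.2 + r.2 - 2) := Prod.ext (by ring) (by omega)
  rw [h₁, h₂, ← add_smul, ← add_smul]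
  refine smul_eq_zero_of_left ?_ _
  push_cast
  ring

/-- The bracket `[x_{(a,i)}, x_{(b,j)}] = ((b-1)i - (a-1)j)·x_{(a+b,i+j-1)}`, extended
bilinearly to the free complex vector space on `{x_{(a,i)} : a ∈ ℤ, i ∈ ℕ}`, takes the
stated values on basis vectors, is bilinear, alternating, and satisfies the Jacobi
identity; hence it makes this vector space into a complex Lie algebra. -/
theorem blockBracket_isLieBracket :
    (∀ p q : BlockIndex, blockBracket (xv p) (xv q) = structCoeff p q • xv (targetIdx p q)) ∧
    (∀ u v w : BlockAlg, blockBracket (u + v) w = blockBracket u w + blockBracket v w) ∧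
    (∀ u v w : BlockAlg, blockBracket u (v + w) = blockBracket u v + blockBracket u w) ∧
    (∀ (c : ℂ) (u v : BlockAlg), blockBracket (c • u) v = c • blockBracket u v) ∧
    (∀ (c : ℂ) (u v : BlockAlg), blockBracket u (c • v) = c • blockBracket u v) ∧
    (∀ u : BlockAlg, blockBracket u u = 0) ∧
    (∀ u v w : BlockAlg,
      blockBracket u (blockBracket v w) + blockBracket v (blockBracket w u) +
        blockBracket w (blockBracket u v) = 0) := by
  refine ⟨blockBracket_xv, ?_, ?_, ?_, ?_, blockBracket_self, ?_⟩
  all_goals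
    intros
    simp only [← blockBracketₗ_apply, map_add, map_smul, LinearMap.add_apply,
      LinearMap.smul_apply]
  exact blockBracketₗ.jacobiator_eq_zero_of_single blockBracketₗ_jacobiator_xv _ _ _

end
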